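/- Let P be a finite set of vectors in ℝ^d, let k ≥ 1, let v_1,…,v_k be a greedy sequence for P, and let v'_1,…,v'_k be the Gram–Schmidt orthogonalization of v_1,…,v_k. Then for every t ∈ {1,…,k} and every p ∈ P, the distance from p to span{v_1,…,v_{t−1}} is at most ‖v'_t‖; in particular, ‖v'_1‖ ≥ ‖v'_2‖ ≥ … ≥ ‖v'_k‖. -/

import Mathlib

open scoped RealInnerProductSpace

/-- `vol u` is the nonnegative real number whose square equals the determinant of the
Gram matrix `(⟪u a, u b⟫)_{a,b}` of the vectors `u 0, …, u (m-1)` in `ℝ^d`. -/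
noncomputable def vol {d m : ℕ} (u : Fin m → EuclideanSpace ℝ (Fin d)) : ℝ :=
  Real.sqrt (Matrix.det (Matrix.of fun a b : Fin m => ⟪u a, u b⟫))

/-- `v 0, …, v (k-1)` is a greedy sequence for the finite set `P`: each `v t` belongs to `P`,
and for every `t` and every `p ∈ P`, `vol (v 0, …, v (t-1), p) ≤ vol (v 0, …, v (t-1), v t)`. -/
def IsGreedySeq {d k : ℕ} (P : Finset (EuclideanSpace ℝ (Fin d)))
    (v : Fin k → EuclideanSpace ℝ (Fin d)) : Prop :=
  (∀ t, v t ∈ P) ∧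
  ∀ t : Fin k, ∀ p ∈ P,
    vol (Fin.snoc (fun j : Fin t.val => v (Fin.castLE t.isLt.le j)) p) ≤
    vol (Fin.snoc (fun j : Fin t.val => v (Fin.castLE t.isLt.le j)) (v t))

/-- Helper instance so that `gramSchmidt` elaborates over `Fin n`. -/
instance finWellFoundedLT (n : ℕ) : WellFoundedLT (Fin n) := inferInstance

/-!
Writing each `v i` as `v' i` plus a combination of the earlier `v' j` exhibits the Gram matrix of
`v` as `L * diag ‖v' i‖² * Lᵀ` with `L` unitriangular, so `vol v = ∏ ‖v' i‖`. Appending `p` to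
`v 0, …, v (t-1)` appends the Gram–Schmidt vector `p - proj p`, whose norm is the distance from `p`
to the span; hence `vol (v 0, …, v (t-1), p)` is that distance times the common factor
`∏_{j<t} ‖v' j‖`, and the greedy choice maximizes the distance to the span, which for `v t` is
`‖v' t‖`. Monotonicity follows by applying this at step `s` to `p = v t`.
-/

open InnerProductSpace Matrix Finset Submodule

variable {E : Type*} [NormedAddCommGroup E] [InnerProductSpace ℝ E]

theorem Matrix.gram_sum_smul {m n : Type*} [Fintype n] (A : Matrix m n ℝ) (w : n → E) :
    gram ℝ (fun i => ∑ j, A i j • w j) = A * gram ℝ w * Aᵀ := by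
  ext i k
  simp only [gram_apply, sum_inner, inner_sum, real_inner_smul_left, real_inner_smul_right,
    mul_apply, transpose_apply, sum_mul]
  refine sum_congr rfl fun _ _ => sum_congr rfl fun _ _ => ?_
  ring

theorem Metric.infDist_eq_norm_sub_starProjection (K : Submodule ℝ E) [K.HasOrthogonalProjection]
    (x : E) : Metric.infDist x K = ‖x - K.starProjection x‖ := by
  rw [Metric.infDist_eq_iInf, starProjection_minimal]
  simp_rw [dist_eq_norm]
  rfl

theorem Metric.antitone_infDist_span_image_Iio {ι : Type*} [Preorder ι] (v : ι → E) (x : E) :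
    Antitone fun t => Metric.infDist x (span ℝ (v '' Set.Iio t)) := fun _ _ hst =>
  Metric.infDist_le_infDist_of_subset
    (span_mono (Set.image_mono (Set.Iio_subset_Iio hst))) ⟨0, zero_mem _⟩

namespace InnerProductSpace

section

variable {ι : Type*} [LinearOrder ι] [LocallyFiniteOrderBot ι] [WellFoundedLT ι]

theorem gram_gramSchmidt [DecidableEq ι] (f : ι → E) :
    gram ℝ (gramSchmidt ℝ f) = diagonal fun i => ‖gramSchmidt ℝ f i‖ ^ 2 := by
  ext i j
  rcases eq_or_ne i j with rfl | hij
  · simp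
  · simp [gramSchmidt_orthogonal ℝ f hij, hij]

theorem exists_isLowerTriangular_eq_sum_smul_gramSchmidt [Fintype ι] [DecidableEq ι]
    (f : ι → E) :
    ∃ L : Matrix ι ι ℝ, L.IsLowerTriangular ∧ (∀ i, L i i = 1) ∧
      f = fun i => ∑ j, L i j • gramSchmidt ℝ f j := by
  refine ⟨1 + of fun i j => if j < i then
      ⟪gramSchmidt ℝ f j, f i⟫ / ‖gramSchmidt ℝ f j‖ ^ 2 else 0, ?_, ?_, ?_⟩
  · intro i j (hij : i < j)
    simp [one_apply, hij.ne, hij.not_gt]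
  · simp
  · funext i
    conv_lhs => rw [gramSchmidt_def'' ℝ f i]
    simp [add_smul, sum_add_distrib, one_apply, ite_smul, Finset.sum_ite, Finset.filter_gt_eq_Iio]

theorem det_gram_eq_prod_norm_gramSchmidt_sq [Fintype ι] [DecidableEq ι] (f : ι → E) :
    (gram ℝ f).det = ∏ i, ‖gramSchmidt ℝ f i‖ ^ 2 := by
  obtain ⟨L, hL, hdiag, hf⟩ := exists_isLowerTriangular_eq_sum_smul_gramSchmidt f
  have hgram : gram ℝ f = L * gram ℝ (gramSchmidt ℝ f) * Lᵀ := by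
    conv_lhs => rw [hf]
    exact gram_sum_smul L _
  have hdet : L.det = 1 := by simp [det_of_isLowerTriangular L hL, hdiag]
  rw [hgram, det_mul, det_mul, det_transpose, hdet, gram_gramSchmidt, det_diagonal, one_mul,
    mul_one]

theorem norm_gramSchmidt_eq_infDist (f : ι → E) (n : ι) :
    ‖gramSchmidt ℝ f n‖ = Metric.infDist (f n) (span ℝ (f '' Set.Iio n)) := by
  have : FiniteDimensional ℝ (span ℝ (f '' Set.Iio n)) :=
    FiniteDimensional.span_of_finite ℝ ((Set.finite_Iio n).image f)
  have hproj : (span ℝ (f '' Set.Iio n)).starProjection (f n) = f n - gramSchmidt ℝ f n := by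
    refine eq_starProjection_of_mem_of_inner_eq_zero ?_ fun w hw => ?_
    · rw [gramSchmidt_def ℝ f n, sub_sub_cancel, ← span_gramSchmidt_Iio ℝ f n]
      refine sum_mem fun i hi => span_mono ?_ (starProjection_apply_mem _ _)
      exact Set.singleton_subset_iff.2 ⟨i, mem_Iio.1 hi, rfl⟩
    · rw [sub_sub_cancel]
      rw [← span_gramSchmidt_Iio ℝ f n] at hw
      refine (isOrtho_span.2 ?_).inner_eq (mem_span_singleton_self _) hw
      rintro _ rfl _ ⟨i, hi, rfl⟩
      exact gramSchmidt_orthogonal ℝ f (ne_of_gt hi)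
  rw [Metric.infDist_eq_norm_sub_starProjection, hproj, sub_sub_cancel]

end

theorem gramSchmidt_comp_castLE {n k : ℕ} (f : Fin k → E) (h : n ≤ k) :
    gramSchmidt ℝ (f ∘ Fin.castLE h) = gramSchmidt ℝ f ∘ Fin.castLE h := by
  funext i
  induction i using WellFoundedLT.induction with
  | ind i ih =>
    simp only [gramSchmidt_def ℝ _ i, Function.comp_apply]
    rw [gramSchmidt_def ℝ f, Fin.sum_Iio_castLE]
    refine congrArg _ (sum_congr rfl fun j hj => ?_)
    rw [ih j (mem_Iio.1 hj)]
    rfl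

end InnerProductSpace

theorem vol_eq_prod_norm_gramSchmidt {d m : ℕ} (u : Fin m → EuclideanSpace ℝ (Fin d)) :
    vol u = ∏ i, ‖gramSchmidt ℝ u i‖ := by
  rw [vol, ← gram, det_gram_eq_prod_norm_gramSchmidt_sq, prod_pow,
    Real.sqrt_sq (prod_nonneg fun _ _ => norm_nonneg _)]

theorem vol_snoc {d m : ℕ} (u : Fin m → EuclideanSpace ℝ (Fin d)) (p : EuclideanSpace ℝ (Fin d)) :
    vol (Fin.snoc u p : Fin (m + 1) → EuclideanSpace ℝ (Fin d)) =
      vol u * Metric.infDist p (span ℝ (Set.range u)) := by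
  have hprefix : gramSchmidt ℝ u = gramSchmidt ℝ (Fin.snoc u p) ∘ Fin.castLE m.le_succ := by
    rw [← gramSchmidt_comp_castLE]
    congr 1
    exact Fin.snoc_comp_castSucc.symm
  have hlast : (Fin.snoc u p : Fin (m + 1) → _) '' Set.Iio (Fin.last m) = Set.range u := by
    rw [← Fin.snoc_comp_castSucc (f := u) (a := p), Set.range_comp, ← Finset.coe_Iio,
      Fin.Iio_last_eq_map]
    simp
  rw [vol_eq_prod_norm_gramSchmidt, vol_eq_prod_norm_gramSchmidt, Fin.prod_univ_castSucc,
    norm_gramSchmidt_eq_infDist, Fin.snoc_last, hlast, hprefix]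
  rfl

namespace IsGreedySeq

variable {d k : ℕ} {P : Finset (EuclideanSpace ℝ (Fin d))} {v : Fin k → EuclideanSpace ℝ (Fin d)}

theorem prod_mul_infDist_le (hv : IsGreedySeq P v) (t : Fin k) {p : EuclideanSpace ℝ (Fin d)}
    (hp : p ∈ P) :
    (∏ j : Fin t, ‖gramSchmidt ℝ v (Fin.castLE t.isLt.le j)‖) *
        Metric.infDist p (span ℝ (v '' Set.Iio t)) ≤
      (∏ j : Fin t, ‖gramSchmidt ℝ v (Fin.castLE t.isLt.le j)‖) * ‖gramSchmidt ℝ v t‖ := by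
  have hrange : Set.range (fun j : Fin t => v (Fin.castLE t.isLt.le j)) = v '' Set.Iio t := by
    rw [← Function.comp_def, Set.range_comp, Fin.range_castLE]
    rfl
  have hvol : vol (fun j : Fin t => v (Fin.castLE t.isLt.le j)) =
      ∏ j : Fin t, ‖gramSchmidt ℝ v (Fin.castLE t.isLt.le j)‖ := by
    change vol (v ∘ Fin.castLE t.isLt.le) = _
    rw [vol_eq_prod_norm_gramSchmidt, gramSchmidt_comp_castLE]
    rfl
  have h := hv.2 t p hp
  rwa [vol_snoc, vol_snoc, hrange, hvol, ← norm_gramSchmidt_eq_infDist] at h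

theorem infDist_le_norm_gramSchmidt (hv : IsGreedySeq P v) (t : Fin k)
    {p : EuclideanSpace ℝ (Fin d)} (hp : p ∈ P) :
    Metric.infDist p (span ℝ (v '' Set.Iio t)) ≤ ‖gramSchmidt ℝ v t‖ := by
  induction t using WellFoundedLT.induction with
  | ind t ih =>
    by_cases hzero : ∃ j : Fin t, gramSchmidt ℝ v (Fin.castLE t.isLt.le j) = 0
    · -- The volume factor vanishes and cannot be cancelled, but by induction `p` already lies
      -- at distance `‖v' j‖ = 0` from the smaller span.
      obtain ⟨j, hj⟩ := hzero
      calc Metric.infDist p (span ℝ (v '' Set.Iio t))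
          ≤ Metric.infDist p (span ℝ (v '' Set.Iio (Fin.castLE t.isLt.le j))) :=
            Metric.antitone_infDist_span_image_Iio v p (le_of_lt j.isLt)
        _ ≤ ‖gramSchmidt ℝ v (Fin.castLE t.isLt.le j)‖ := ih _ j.isLt
        _ = 0 := by rw [hj, norm_zero]
        _ ≤ ‖gramSchmidt ℝ v t‖ := norm_nonneg _
    · simp only [not_exists] at hzero
      exact le_of_mul_le_mul_left (hv.prod_mul_infDist_le t hp)
        (prod_pos fun j _ => norm_pos_iff.2 (hzero j))

end IsGreedySeq

theorem greedy_dist_le_and_gramSchmidt_norm_antitone_general {d k : ℕ}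
    (P : Finset (EuclideanSpace ℝ (Fin d)))
    (v : Fin k → EuclideanSpace ℝ (Fin d)) (hv : IsGreedySeq P v) :
    (∀ t : Fin k, ∀ p ∈ P,
      Metric.infDist p
        ((Submodule.span ℝ (v '' {j : Fin k | j < t}) : Submodule ℝ (EuclideanSpace ℝ (Fin d))) :
          Set (EuclideanSpace ℝ (Fin d))) ≤ ‖InnerProductSpace.gramSchmidt ℝ v t‖) ∧
    (∀ s t : Fin k, s ≤ t → ‖InnerProductSpace.gramSchmidt ℝ v t‖ ≤ ‖InnerProductSpace.gramSchmidt ℝ v s‖) := by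
  refine ⟨fun t p hp => hv.infDist_le_norm_gramSchmidt t hp, fun s t hst => ?_⟩
  calc ‖gramSchmidt ℝ v t‖ = Metric.infDist (v t) (span ℝ (v '' Set.Iio t)) :=
        norm_gramSchmidt_eq_infDist v t
    _ ≤ Metric.infDist (v t) (span ℝ (v '' Set.Iio s)) :=
        Metric.antitone_infDist_span_image_Iio v (v t) hst
    _ ≤ ‖gramSchmidt ℝ v s‖ := hv.infDist_le_norm_gramSchmidt s (hv.1 t)

/-- **Greedy maximizes distances, and Gram–Schmidt norms are non-increasing.** If
`v 0, …, v (k-1)` is a greedy sequence for `P` and `v' = gramSchmidt ℝ v` is its Gram–Schmidt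
orthogonalization, then for every `t` and every `p ∈ P`, the distance from `p` to
`span {v 0, …, v (t-1)}` is at most `‖v' t‖`; in particular
`‖v' 0‖ ≥ ‖v' 1‖ ≥ … ≥ ‖v' (k-1)‖`. -/
theorem greedy_dist_le_and_gramSchmidt_norm_antitone {d k : ℕ} (hk : 1 ≤ k)
    (P : Finset (EuclideanSpace ℝ (Fin d)))
    (v : Fin k → EuclideanSpace ℝ (Fin d)) (hv : IsGreedySeq P v) :
    (∀ t : Fin k, ∀ p ∈ P,
      Metric.infDist p
        ((Submodule.span ℝ (v '' {j : Fin k | j < t}) : Submodule ℝ (EuclideanSpace ℝ (Fin d))) :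
          Set (EuclideanSpace ℝ (Fin d))) ≤ ‖InnerProductSpace.gramSchmidt ℝ v t‖) ∧
    (∀ s t : Fin k, s ≤ t → ‖InnerProductSpace.gramSchmidt ℝ v t‖ ≤ ‖InnerProductSpace.gramSchmidt ℝ v s‖) :=
  greedy_dist_le_and_gramSchmidt_norm_antitone_general P v hv
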